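/- arXiv:2502.04093 — 2 statements merged into one kernel-verified Lean document; each statement's English description precedes it below -/
import Mathlib

section
/- If the per-level reconstruction errors satisfy the recursion x_l − x̂_l = δy_l + P_l(x_{l+1} − x̂_{l+1} − ε_{l+1}) + ε_l with ‖ε_l‖_∞ ≤ eb and each P_l has L∞ operator norm at most p ≥ 1, then the total error at the finest level is bounded by ∑_{l=0}^{L-1} p^l ‖δy_{l+1}‖_∞ + eb, where the propagated-loss terms compound geometrically through successive predictions. -/
/-!
Removing the quantization error `ε l` from the level-`l` error leaves `u l = δy l + P l (u (l + 1))`,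
the discarded bitplanes plus their propagated loss. Each prediction multiplies norms by at most `p`,
so unrolling this recursion from the top level gives `‖u 1‖ ≤ ∑ p ^ k ‖δy (k + 1)‖`, and the
finest level adds only its own `‖ε 1‖ ≤ eb`.
-/

open Finset

theorem norm_le_sum_pow_mul_norm_of_forward_recursion {E : Type*} [SeminormedAddCommGroup E]
    {p : ℝ} (hp : 0 ≤ p) (m : ℕ) (u d : ℕ → E) (T : ℕ → E → E)
    (hT : ∀ k v, ‖T k v‖ ≤ p * ‖v‖)
    (hstep : ∀ k < m, u k = d k + T k (u (k + 1))) (htop : u m = d m) :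
    ‖u 0‖ ≤ ∑ k ∈ range (m + 1), p ^ k * ‖d k‖ := by
  induction m generalizing u d T with
  | zero => simp [htop]
  | succ m ih =>
    have htail : ‖u 1‖ ≤ ∑ k ∈ range (m + 1), p ^ k * ‖d (k + 1)‖ :=
      ih (fun k => u (k + 1)) (fun k => d (k + 1)) (fun k => T (k + 1)) (fun k => hT (k + 1))
        (fun k hk => hstep (k + 1) (by omega)) htop
    calc ‖u 0‖ = ‖d 0 + T 0 (u 1)‖ := by rw [hstep 0 m.succ_pos]
      _ ≤ ‖d 0‖ + p * ‖u 1‖ := (norm_add_le _ _).trans (add_le_add_right (hT 0 _) _)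
      _ ≤ ‖d 0‖ + p * ∑ k ∈ range (m + 1), p ^ k * ‖d (k + 1)‖ := by gcongr
      _ = ∑ k ∈ range (m + 1 + 1), p ^ k * ‖d k‖ := by
        rw [sum_range_succ' (fun k => p ^ k * ‖d k‖), mul_sum, add_comm]
        simp only [pow_succ', mul_assoc, pow_zero, one_mul]

/-- If per-level reconstruction errors satisfy the recursion
`x l − xhat l = δy l + P l (x (l+1) − xhat (l+1) − ε (l+1)) + ε l` for `1 ≤ l < L`,
with top level `x L − xhat L = δy L + ε L`, quantization errors `‖ε l‖_∞ ≤ eb`, and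
each linear predictor `P l` of L∞ operator norm at most `p ≥ 1`, then the total error
at the finest level is bounded by `∑_{l=0}^{L-1} p^l ‖δy (l+1)‖_∞ + eb`. -/
theorem stmt_7 (n L : ℕ) (hL : 1 ≤ L) (p eb : ℝ) (hp : 1 ≤ p)
    (x xhat δy ε : ℕ → (Fin n → ℝ))
    (P : ℕ → (Fin n → ℝ) →ₗ[ℝ] (Fin n → ℝ))
    (hP : ∀ l (v : Fin n → ℝ), ‖P l v‖ ≤ p * ‖v‖)
    (hε : ∀ l, ‖ε l‖ ≤ eb)
    (hrec : ∀ l, 1 ≤ l → l < L →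
      x l - xhat l = δy l + P l (x (l + 1) - xhat (l + 1) - ε (l + 1)) + ε l)
    (htop : x L - xhat L = δy L + ε L) :
    ‖x 1 - xhat 1‖ ≤ (∑ l ∈ Finset.range L, p ^ l * ‖δy (l + 1)‖) + eb := by
  obtain ⟨m, rfl⟩ : ∃ m, L = m + 1 := ⟨L - 1, by omega⟩
  set u : ℕ → Fin n → ℝ := fun k => x (k + 1) - xhat (k + 1) - ε (k + 1) with hu
  have hpropagated : ‖u 0‖ ≤ ∑ k ∈ range (m + 1), p ^ k * ‖δy (k + 1)‖ := by
    refine norm_le_sum_pow_mul_norm_of_forward_recursion (zero_le_one.trans hp) m u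
      (fun k => δy (k + 1)) (fun k => P (k + 1)) (fun k => hP (k + 1)) (fun k hk => ?_) ?_
    · simp only [hu, hrec (k + 1) (by omega) (by omega)]
      abel
    · simp only [hu, htop]
      abel
  calc ‖x 1 - xhat 1‖ = ‖u 0 + ε 1‖ := by simp [hu]
    _ ≤ ‖u 0‖ + ‖ε 1‖ := norm_add_le _ _
    _ ≤ _ := add_le_add hpropagated (hε 1)
end

section
/- In the reconstruction recursion of Algorithm 1, running the progressive levels with an accumulated increment Δ (initialized to 0, updated by Δ_l = Predict(Δ, ŷ_l)) and adding it to a previously reconstructed lower-precision output x̂^(old) yields exactly the same result as a full reconstruction using the union of old and new bitplanes, provided the predictors P_l are linear. -/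
/-- Incremental reconstruction equals full reconstruction: running the level recursion
with the incremental residuals `ynew l − yold l` starting from zero and adding the
resulting increment `Δ` to the previously reconstructed output yields exactly the same
result as a full reconstruction from the new residuals, provided the predictors are
linear. -/
theorem stmt_14 (n L : ℕ)
    (P : ℕ → (Fin n → ℝ) →ₗ[ℝ] (Fin n → ℝ))
    (yold ynew xold xnew Δ : ℕ → (Fin n → ℝ))
    (hold_top : xold (L + 1) = 0) (hnew_top : xnew (L + 1) = 0) (hΔ_top : Δ (L + 1) = 0)
    (hold : ∀ l ≤ L, xold l = P l (xold (l + 1)) + yold l)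
    (hnew : ∀ l ≤ L, xnew l = P l (xnew (l + 1)) + ynew l)
    (hΔ : ∀ l ≤ L, Δ l = P l (Δ (l + 1)) + (ynew l - yold l)) :
    ∀ l ≤ L + 1, xold l + Δ l = xnew l := by
  intro l hl
  induction' hd : L + 1 - l with d ih generalizing l
  · have : l = L + 1 := by omega
    subst this
    simp [hold_top, hnew_top, hΔ_top]
  · have hlL : l ≤ L := by omega
    have ihl : xold (l + 1) + Δ (l + 1) = xnew (l + 1) := ih (l + 1) (by omega) (by omega)
    rw [hold l hlL, hnew l hlL, hΔ l hlL, ← ihl, map_add]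
    abel
end
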